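/- arXiv:2111.11160 — 3 statements merged into one kernel-verified Lean document; each statement's English description precedes it below -/
import Mathlib

section
/- If a column C (a strictly increasing sequence over the ordered alphabet 1 < ... < n < -n < ... < -1) satisfies the one column condition (for every value i with both i and -i in C, the number of entries x with x ≤ i or x ≥ -i is at most i), then C has at most n entries. -/
/-- The alphabet `[±n] = {1 < 2 < ⋯ < n < n̄ < ⋯ < 1̄}` is encoded as `{1, …, 2n} ⊆ ℕ`
with the usual order, the barred letter `ī` being encoded as `2n+1-i`. -/
def bar (n x : ℕ) : ℕ := 2 * n + 1 - x

/-- A column over `[±n]`: a strictly increasing list with entries in `{1, …, 2n}`. -/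
def IsColumn (n : ℕ) (C : List ℕ) : Prop :=
  C.Chain' (· < ·) ∧ ∀ x ∈ C, 1 ≤ x ∧ x ≤ 2 * n

/-- The one column condition (1CC): for every unbarred `i` with both `i` and `ī` in `C`,
the number of entries `x` with `x ≤ i` or `x ≥ ī` is at most `i`. -/
def OCC (n : ℕ) (C : List ℕ) : Prop :=
  ∀ i, 1 ≤ i → i ≤ n → i ∈ C → bar n i ∈ C →
    C.countP (fun x => decide (x ≤ i ∨ bar n i ≤ x)) ≤ i

/-!
Let `|x|` be the letter `x` with its bar removed, and let `i` be the largest index such that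
both `i` and `ī` occur in `C` (or `0` if there is none). Two distinct entries with the same
absolute value `j` are `j` and `j̄`, so `j ≤ i`; hence the entries strictly between `i` and `ī`
have pairwise distinct absolute values in `{i+1, …, n}`, and there are at most `n - i` of them.
The remaining entries are those counted by the 1CC at `i`, so there are at most `i` of them.
-/

/-- The absolute value `|x| ∈ [n]` of a letter `x ∈ [±n]`. -/
def letterAbs (n x : ℕ) : ℕ := min x (bar n x)

variable {n i : ℕ} {C : List ℕ}

theorem letterAbs_mem_Icc {x : ℕ} (hx : 1 ≤ x ∧ x ≤ 2 * n) (hix : i < x)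
    (hxi : x < bar n i) : letterAbs n x ∈ Finset.Icc (i + 1) n := by
  simp only [letterAbs, bar, Finset.mem_Icc] at *
  omega

theorem IsColumn.nodup (hC : IsColumn n C) : C.Nodup :=
  hC.1.pairwise.nodup

theorem IsColumn.mem_of_letterAbs_eq (hC : IsColumn n C) {x y : ℕ} (hx : x ∈ C) (hy : y ∈ C)
    (hxy : x ≠ y) (h : letterAbs n x = letterAbs n y) :
    letterAbs n x ∈ C ∧ bar n (letterAbs n x) ∈ C := by
  have hx' := hC.2 x hx
  have hy' := hC.2 y hy
  simp only [letterAbs, bar] at h ⊢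
  rcases le_total x (2 * n + 1 - x) with hle | hle
  · rw [min_eq_left hle]
    exact ⟨hx, by rwa [show 2 * n + 1 - x = y by omega]⟩
  · rw [min_eq_right hle, show 2 * n + 1 - (2 * n + 1 - x) = x by omega]
    exact ⟨by rwa [show 2 * n + 1 - x = y by omega], hx⟩

theorem IsColumn.countP_between_le (hC : IsColumn n C)
    (hi : ∀ j ≤ n, j ∈ C → bar n j ∈ C → j ≤ i) :
    C.countP (fun x => i < x ∧ x < bar n i) ≤ n - i := by
  set M := C.filter (fun x => i < x ∧ x < bar n i)
  have hM : ∀ x ∈ M, x ∈ C ∧ i < x ∧ x < bar n i := by simp [M]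
  have hmaps : Set.MapsTo (letterAbs n) M.toFinset (Finset.Icc (i + 1) n) := by
    intro x hx
    obtain ⟨hxC, hix, hxi⟩ := hM x (List.mem_toFinset.1 hx)
    exact letterAbs_mem_Icc (hC.2 x hxC) hix hxi
  have hinj : Set.InjOn (letterAbs n) M.toFinset := by
    intro x hx y hy h
    by_contra hxy
    obtain ⟨hjC, hbjC⟩ := hC.mem_of_letterAbs_eq (hM x (List.mem_toFinset.1 hx)).1
      (hM y (List.mem_toFinset.1 hy)).1 hxy h
    have hj := Finset.mem_Icc.1 (hmaps hx)
    exact absurd (hi _ hj.2 hjC hbjC) (by omega)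
  calc C.countP (fun x => i < x ∧ x < bar n i) = M.toFinset.card := by
        rw [List.countP_eq_length_filter, List.toFinset_card_of_nodup (hC.nodup.filter _)]
    _ ≤ (Finset.Icc (i + 1) n).card := Finset.card_le_card_of_injOn _ hmaps hinj
    _ = n - i := by simp

theorem IsColumn.countP_outside_le (hC : IsColumn n C) (h1cc : OCC n C) (hin : i ≤ n)
    (hi : i ≠ 0 → i ∈ C ∧ bar n i ∈ C) :
    C.countP (fun x => x ≤ i ∨ bar n i ≤ x) ≤ i := by
  rcases Nat.eq_zero_or_pos i with rfl | hpos
  · refine (List.countP_eq_zero.2 fun x hx => ?_).le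
    have := hC.2 x hx
    rw [decide_eq_true_eq, bar]
    omega
  · obtain ⟨hiC, hbiC⟩ := hi hpos.ne'
    exact h1cc i hpos hin hiC hbiC

/-- a column satisfying the one column condition has at most `n` entries. -/
theorem one_column_condition_length_le (n : ℕ) (C : List ℕ)
    (hC : IsColumn n C) (h1cc : OCC n C) : C.length ≤ n := by
  set i := Nat.findGreatest (fun j => j ∈ C ∧ bar n j ∈ C) n
  have hin : i ≤ n := Nat.findGreatest_le n
  have hout := hC.countP_outside_le h1cc hin (Nat.findGreatest_of_ne_zero rfl)
  have hbetween : C.countP (fun x => i < x ∧ x < bar n i) ≤ n - i :=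
    hC.countP_between_le fun j hj hjC hbjC => Nat.le_findGreatest hj ⟨hjC, hbjC⟩
  have hcompl : C.countP (fun x => ¬(x ≤ i ∨ bar n i ≤ x))
      = C.countP (fun x => i < x ∧ x < bar n i) :=
    List.countP_congr fun x _ => by simp only [decide_eq_true_eq]; omega
  have hsplit := C.length_eq_countP_add_countP (fun x => x ≤ i ∨ bar n i ≤ x)
  simp only [decide_eq_true_eq] at hsplit
  omega
end

section
/- If C is an admissible column, then ℓC ≤ C ≤ rC entrywise; moreover ℓC has the same barred part as C and rC has the same unbarred part as C. -/
/-- The set `I` of unbarred letters `z` such that both `z` and `z̄` occur in `C`,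
listed in decreasing order `z₁ > z₂ > ⋯ > z_r`. -/
def Ilist (n : ℕ) (C : List ℕ) : List ℕ :=
  ((List.range (n + 1)).filter (fun z => decide (1 ≤ z ∧ z ∈ C ∧ bar n z ∈ C))).reverse

/-- The greatest unbarred letter `t < bound` with `t ∉ C` and `t̄ ∉ C`, if any. -/
def pickBelow (n : ℕ) (C : List ℕ) (bound : ℕ) : Option ℕ :=
  ((List.range bound).filter (fun t => decide (1 ≤ t ∧ t ≤ n ∧ t ∉ C ∧ bar n t ∉ C))).max?

/-- The greedy construction of the set `J = {t₁ > ⋯ > t_r}` of Definition of splitting: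
`t₁` is the greatest letter `< z₁` with `t₁, t̄₁ ∉ C` and `tᵢ` is the greatest letter
`< min (tᵢ₋₁, zᵢ)` with `tᵢ, t̄ᵢ ∉ C`; returns `none` if at some stage no letter exists. -/
def splitJ (n : ℕ) (C : List ℕ) : List ℕ → ℕ → Option (List ℕ)
  | [], _ => some []
  | z :: zs, bound =>
    match pickBelow n C (min bound z) with
    | none => none
    | some t => (splitJ n C zs t).map (t :: ·)

def JlistOpt (n : ℕ) (C : List ℕ) : Option (List ℕ) := splitJ n C (Ilist n C) (n + 1)

/-- `C` can be split: the set `J` of the splitting definition exists. -/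
def CanSplit (n : ℕ) (C : List ℕ) : Prop := (JlistOpt n C).isSome = true

/-- The set `J = {t₁ > ⋯ > t_r}` (empty if `C` cannot be split). -/
def Jlist (n : ℕ) (C : List ℕ) : List ℕ := (JlistOpt n C).getD []

def sortCol (L : List ℕ) : List ℕ := L.mergeSort (· ≤ ·)

/-- The right column `rC`: replace each barred `z̄ᵢ` (for `zᵢ ∈ I`) by `t̄ᵢ` and reorder. -/
def rCol (n : ℕ) (C : List ℕ) : List ℕ :=
  sortCol ((C.filter (fun x => decide (x ∉ (Ilist n C).map (bar n)))) ++ (Jlist n C).map (bar n))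

/-- The left column `ℓC`: replace each unbarred `zᵢ ∈ I` by `tᵢ` and reorder. -/
def lCol (n : ℕ) (C : List ℕ) : List ℕ :=
  sortCol ((C.filter (fun x => decide (x ∉ Ilist n C))) ++ Jlist n C)

/-- `Φ(C)`: the column of the same size whose unbarred entries are taken from `ℓC`
and whose barred entries are taken from `rC`. -/
def PhiCol (n : ℕ) (C : List ℕ) : List ℕ :=
  sortCol ((lCol n C).filter (fun x => decide (x ≤ n)) ++
    (rCol n C).filter (fun x => decide (n < x)))

/-!
For `z ∈ I`, sort the letters `i ≤ z` by how many of `i, ī` lie in `C`: the 1CC at `z` then says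
that there are at most as many doubled letters `≤ z` as free ones (`i, ī ∉ C`). This Hall-type
condition makes the greedy choice of `t₁ > t₂ > ⋯` succeed, with `tᵢ < zᵢ`. So `ℓC` (resp. `rC`)
arises from `C` by replacing the sublist `I` (resp. `Ī`) by the entrywise smaller `J` (resp. the
entrywise larger `J̄`) and re-sorting, and sorting is monotone for the entrywise order. All
replaced letters lie on one side of `n`, so the other half of `C` is untouched.
-/

open Finset

namespace List

variable {α : Type*} [LinearOrder α]

theorem Pairwise.getElem_le_iff_lt_countP {l : List α} (hl : l.Pairwise (· ≤ ·)) {k : ℕ}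
    (hk : k < l.length) (v : α) : l[k] ≤ v ↔ k < l.countP (· ≤ v) := by
  induction l generalizing k with
  | nil => simp at hk
  | cons x l ih =>
    obtain ⟨hx, hl⟩ := pairwise_cons.mp hl
    by_cases hxv : x ≤ v
    · cases k with
      | zero => simp [hxv]
      | succ k => simp [ih hl (Nat.lt_of_succ_lt_succ hk), hxv]
    · have hnone : l.countP (· ≤ v) = 0 :=
        countP_eq_zero.mpr fun y hy hyv => hxv ((hx y hy).trans (by simpa using hyv))
      cases k with
      | zero => simp [hxv, hnone]
      | succ k => simpa [hnone, hxv] using (not_le.mp hxv).trans_le (hx _ (getElem_mem _))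

theorem Forall₂.countP_le_le_countP_le {a b : List α} (h : Forall₂ (· ≤ ·) a b) (v : α) :
    b.countP (· ≤ v) ≤ a.countP (· ≤ v) := by
  induction h with
  | nil => rfl
  | @cons x y a b hxy _ ih =>
    by_cases hy : y ≤ v
    · simp [hy, hxy.trans hy, ih]
    · simp only [countP_cons, hy, decide_false, Bool.false_eq_true, if_false]
      omega

theorem forall₂_le_of_perm_of_pairwise {a b l₁ l₂ : List α} (h : Forall₂ (· ≤ ·) a b)
    (h₁ : l₁ ~ a) (h₂ : l₂ ~ b) (hl₁ : l₁.Pairwise (· ≤ ·)) (hl₂ : l₂.Pairwise (· ≤ ·)) :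
    Forall₂ (· ≤ ·) l₁ l₂ := by
  have hlen : l₁.length = l₂.length := by rw [h₁.length_eq, h₂.length_eq, h.length_eq]
  refine forall₂_iff_get.mpr ⟨hlen, fun k hk₁ hk₂ => ?_⟩
  simp only [get_eq_getElem]
  rw [hl₁.getElem_le_iff_lt_countP hk₁, h₁.countP_eq]
  refine lt_of_lt_of_le ?_ (h.countP_le_le_countP_le _)
  rw [← h₂.countP_eq, ← hl₂.getElem_le_iff_lt_countP hk₂]

end List

theorem List.Forall₂.exists_of_mem_left {α β : Type*} {R : α → β → Prop} {l₁ : List α}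
    {l₂ : List β} (h : List.Forall₂ R l₁ l₂) {x : α} (hx : x ∈ l₁) : ∃ y ∈ l₂, R x y := by
  induction h with
  | nil => simp at hx
  | @cons a b l₁ l₂ hab _ ih =>
    rcases List.mem_cons.mp hx with rfl | hx
    · exact ⟨b, List.mem_cons_self, hab⟩
    · obtain ⟨y, hy, hxy⟩ := ih hx
      exact ⟨y, List.mem_cons_of_mem _ hy, hxy⟩

section Sorting

variable {C L a b s s' s₁ s₂ : List ℕ}

theorem sortCol_perm (L : List ℕ) : (sortCol L).Perm L := List.mergeSort_perm L _

theorem pairwise_sortCol (L : List ℕ) : (sortCol L).Pairwise (· ≤ ·) :=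
  List.pairwise_mergeSort' _ L

theorem sortCol_mono (h : List.Forall₂ (· ≤ ·) a b) :
    List.Forall₂ (· ≤ ·) (sortCol a) (sortCol b) :=
  List.forall₂_le_of_perm_of_pairwise h (sortCol_perm a) (sortCol_perm b) (pairwise_sortCol a)
    (pairwise_sortCol b)

theorem sortCol_eq_of_perm (h : L.Perm C) (hC : C.Pairwise (· ≤ ·)) : sortCol L = C :=
  ((sortCol_perm L).trans h).eq_of_pairwise' (pairwise_sortCol L) hC

/-- `lCol n C` and `rCol n C` are, by definition, `replaceSort C I J` and `replaceSort C Ī J̄`. -/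
def replaceSort (C s s' : List ℕ) : List ℕ :=
  sortCol (C.filter (fun x => decide (x ∉ s)) ++ s')

theorem replaceSort_self (hC : C.Pairwise (· < ·)) (hs : s.Nodup) (hsC : s ⊆ C) :
    replaceSort C s s = C := by
  refine sortCol_eq_of_perm ?_ (hC.imp le_of_lt)
  refine (List.perm_ext_iff_of_nodup ?_ hC.nodup).mpr fun x => ?_
  · exact (hC.nodup.filter _).append hs fun x hx hx' => by simp_all
  · by_cases hx : x ∈ s
    · simp [hx, hsC hx]
    · simp [hx]

theorem replaceSort_mono (h : List.Forall₂ (· ≤ ·) s₁ s₂) :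
    List.Forall₂ (· ≤ ·) (replaceSort C s s₁) (replaceSort C s s₂) :=
  sortCol_mono (List.rel_append (List.forall₂_refl _) h)

theorem filter_replaceSort (hC : C.Pairwise (· ≤ ·)) {p : ℕ → Bool}
    (hs : ∀ x ∈ s, p x = false) (hs' : ∀ x ∈ s', p x = false) :
    (replaceSort C s s').filter p = C.filter p := by
  refine List.Perm.eq_of_pairwise' ((pairwise_sortCol _).filter p) (hC.filter p) ?_
  refine ((sortCol_perm _).filter p).trans ?_
  have hnil : s'.filter p = [] := List.filter_eq_nil_iff.mpr fun x hx => by simp [hs' x hx]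
  rw [List.filter_append, hnil, List.append_nil, List.filter_filter]
  refine List.Perm.of_eq (List.filter_congr fun x _ => ?_)
  by_cases hx : x ∈ s <;> simp [hx, hs]

end Sorting

section

variable {n z : ℕ} {C : List ℕ}

theorem bar_bar {x : ℕ} (hx : x ≤ 2 * n + 1) : bar n (bar n x) = x := by
  simp only [bar]; omega

theorem countP_le_or_bar_le_eq_card_add_card (hC : IsColumn n C) (hzn : z ≤ n) :
    C.countP (fun x => decide (x ≤ z ∨ bar n z ≤ x)) =
      #{i ∈ Icc 1 z | i ∈ C} + #{i ∈ Icc 1 z | bar n i ∈ C} := by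
  obtain ⟨hchain, hbounds⟩ := hC
  have hnodup : C.Nodup := (List.isChain_iff_pairwise.mp hchain).nodup
  have hdisj : Disjoint {x ∈ C.toFinset | x ≤ z} {x ∈ C.toFinset | bar n z ≤ x} :=
    disjoint_filter.mpr fun x _ hxz hzx => by simp only [bar] at hzx; omega
  have hlow : {x ∈ C.toFinset | x ≤ z} = {i ∈ Icc 1 z | i ∈ C} := by
    ext x
    simp only [mem_filter, List.mem_toFinset, mem_Icc]
    exact ⟨fun h => ⟨⟨(hbounds x h.1).1, h.2⟩, h.1⟩, fun h => ⟨h.2, h.1.2⟩⟩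
  have hhigh : #{x ∈ C.toFinset | bar n z ≤ x} = #{i ∈ Icc 1 z | bar n i ∈ C} := by
    refine card_nbij' (bar n) (bar n) ?_ ?_ ?_ ?_ <;> intro x hx <;>
      simp only [coe_filter, List.mem_toFinset, mem_Icc, Set.mem_ofPred_eq] at hx ⊢
    · have := hbounds x hx.1
      rw [bar_bar (by omega)]
      exact ⟨⟨by simp only [bar]; omega, by simp only [bar] at hx ⊢; omega⟩, hx.1⟩
    · exact ⟨hx.2, by simp only [bar]; omega⟩
    · exact bar_bar (by have := hbounds x hx.1; omega)
    · exact bar_bar (by omega)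
  rw [← hnodup.card_eq_countP, filter_or, card_union_of_disjoint hdisj, hlow, hhigh]

theorem card_doubled_le_card_free (hC : IsColumn n C) (hadm : OCC n C) (hz : 1 ≤ z)
    (hzn : z ≤ n) (hzC : z ∈ C) (hbz : bar n z ∈ C) :
    #{i ∈ Icc 1 z | i ∈ C ∧ bar n i ∈ C} ≤ #{i ∈ Icc 1 z | i ∉ C ∧ bar n i ∉ C} := by
  have hocc := hadm z hz hzn hzC hbz
  rw [countP_le_or_bar_le_eq_card_add_card hC hzn] at hocc
  have hsplit := card_filter_add_card_filter_not (s := Icc 1 z) (fun i => i ∈ C ∨ bar n i ∈ C)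
  simp only [not_or, Nat.card_Icc, add_tsub_cancel_right] at hsplit
  have hincl := card_union_add_card_inter {i ∈ Icc 1 z | i ∈ C} {i ∈ Icc 1 z | bar n i ∈ C}
  rw [← filter_or, ← filter_and] at hincl
  omega

def freeCount (n : ℕ) (C : List ℕ) (b : ℕ) : ℕ :=
  #{t ∈ range b | 1 ≤ t ∧ t ≤ n ∧ t ∉ C ∧ bar n t ∉ C}

theorem freeCount_mono : Monotone (freeCount n C) := fun _ _ hb =>
  card_le_card (filter_subset_filter _ (range_subset_range.mpr hb))

theorem mem_of_pickBelow_eq_some {b t : ℕ} (h : pickBelow n C b = some t) :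
    t < b ∧ 1 ≤ t ∧ t ≤ n ∧ t ∉ C ∧ bar n t ∉ C := by
  simpa using List.max?_mem h

theorem freeCount_eq_succ_of_pickBelow_eq_some {b t : ℕ} (h : pickBelow n C b = some t) :
    freeCount n C b = freeCount n C t + 1 := by
  have hfree := mem_of_pickBelow_eq_some h
  have hmax := (List.max?_eq_some_iff.mp h).2
  simp only [List.mem_filter, List.mem_range, decide_eq_true_eq] at hmax
  have : {s ∈ range b | 1 ≤ s ∧ s ≤ n ∧ s ∉ C ∧ bar n s ∉ C} =
      insert t {s ∈ range t | 1 ≤ s ∧ s ≤ n ∧ s ∉ C ∧ bar n s ∉ C} := by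
    ext s
    simp only [mem_insert, mem_filter, mem_range]
    constructor
    · rintro ⟨hsb, hs⟩
      rcases (hmax s ⟨hsb, hs⟩).lt_or_eq with hst | rfl
      · exact Or.inr ⟨hst, hs⟩
      · exact Or.inl rfl
    · rintro (rfl | ⟨hst, hs⟩)
      · exact ⟨hfree.1, hfree.2⟩
      · exact ⟨hst.trans hfree.1, hs⟩
  rw [freeCount, this, card_insert_of_notMem (by simp), freeCount]

theorem pickBelow_isSome {b : ℕ} (h : 0 < freeCount n C b) : (pickBelow n C b).isSome := by
  obtain ⟨t, ht⟩ := card_pos.mp h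
  exact List.isSome_max?_of_mem (a := t) (by simpa using ht)

theorem splitJ_isSome {zs : List ℕ} (hzs : zs.Pairwise (· > ·)) {bound : ℕ}
    (hcount : ∀ z ∈ zs, zs.countP (· ≤ z) ≤ freeCount n C (min bound z)) :
    (splitJ n C zs bound).isSome := by
  induction zs generalizing bound with
  | nil => rfl
  | cons z zs ih =>
    have hhead : (z :: zs).countP (· ≤ z) = zs.length + 1 :=
      List.countP_eq_length.mpr fun w hw => by
        rcases List.mem_cons.mp hw with rfl | hw
        · simp
        · simpa using (le_of_lt ((List.pairwise_cons.mp hzs).1 w hw))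
    have hz := hhead ▸ hcount z List.mem_cons_self
    have hpos : 0 < freeCount n C (min bound z) := by omega
    obtain ⟨t, ht⟩ := Option.isSome_iff_exists.mp (pickBelow_isSome hpos)
    have hsucc := freeCount_eq_succ_of_pickBelow_eq_some ht
    rw [splitJ, ht, Option.isSome_map]
    refine ih hzs.of_cons fun w hw => ?_
    rw [freeCount_mono.map_min]
    refine le_min (by have := zs.countP_le_length (p := (· ≤ w)); omega) ?_
    exact (List.sublist_cons_self z zs).countP_le.trans
      ((hcount w (List.mem_cons_of_mem _ hw)).trans (freeCount_mono (min_le_right _ _)))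

theorem forall₂_lt_of_splitJ_eq_some :
    ∀ {zs ts : List ℕ} {bound : ℕ}, splitJ n C zs bound = some ts → List.Forall₂ (· < ·) ts zs
  | [], ts, _, h => by cases h; exact .nil
  | z :: zs, ts, bound, h => by
    rw [splitJ] at h
    split at h
    · cases h
    · rename_i t ht
      obtain ⟨ts', hts', rfl⟩ := Option.map_eq_some_iff.mp h
      exact .cons ((mem_of_pickBelow_eq_some ht).1.trans_le (min_le_right _ _))
        (forall₂_lt_of_splitJ_eq_some hts')

theorem mem_Ilist : z ∈ Ilist n C ↔ 1 ≤ z ∧ z ≤ n ∧ z ∈ C ∧ bar n z ∈ C := by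
  simp only [Ilist, List.mem_reverse, List.mem_filter, List.mem_range, decide_eq_true_eq,
    Nat.lt_succ_iff]
  tauto

theorem pairwise_Ilist : (Ilist n C).Pairwise (· > ·) :=
  List.pairwise_reverse.mpr (List.pairwise_lt_range.filter _)

theorem countP_Ilist_le_freeCount (hC : IsColumn n C) (hadm : OCC n C) (hz : z ∈ Ilist n C) :
    (Ilist n C).countP (· ≤ z) ≤ freeCount n C z := by
  obtain ⟨hz1, hzn, hzC, hbz⟩ := mem_Ilist.mp hz
  calc (Ilist n C).countP (· ≤ z) = #{i ∈ Icc 1 z | i ∈ C ∧ bar n i ∈ C} := by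
        rw [← pairwise_Ilist.nodup.card_eq_countP]
        congr 1
        ext i
        simp only [mem_filter, List.mem_toFinset, mem_Ilist, mem_Icc]
        constructor
        · rintro ⟨⟨hi1, -, hiC, hbi⟩, hiz⟩
          exact ⟨⟨hi1, hiz⟩, hiC, hbi⟩
        · rintro ⟨⟨hi1, hiz⟩, hiC, hbi⟩
          exact ⟨⟨hi1, hiz.trans hzn, hiC, hbi⟩, hiz⟩
    _ ≤ #{i ∈ Icc 1 z | i ∉ C ∧ bar n i ∉ C} := card_doubled_le_card_free hC hadm hz1 hzn hzC hbz
    _ = freeCount n C z := by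
        rw [freeCount]
        congr 1
        ext i
        simp only [mem_filter, mem_Icc, mem_range]
        constructor
        · rintro ⟨⟨hi1, hiz⟩, hiC, hbi⟩
          exact ⟨lt_of_le_of_ne hiz (by rintro rfl; exact hiC hzC), hi1, by omega, hiC, hbi⟩
        · rintro ⟨hiz, hi1, -, hiC, hbi⟩
          exact ⟨⟨hi1, hiz.le⟩, hiC, hbi⟩

theorem IsColumn.canSplit (hC : IsColumn n C) (hadm : OCC n C) : CanSplit n C :=
  splitJ_isSome pairwise_Ilist fun z hz => by
    rw [min_eq_right (by have := (mem_Ilist.mp hz).2.1; omega)]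
    exact countP_Ilist_le_freeCount hC hadm hz

theorem forall₂_Jlist_lt_Ilist (hC : IsColumn n C) (hadm : OCC n C) :
    List.Forall₂ (· < ·) (Jlist n C) (Ilist n C) := by
  obtain ⟨J, hJ⟩ := Option.isSome_iff_exists.mp (hC.canSplit hadm)
  simpa only [Jlist, hJ, Option.getD_some] using forall₂_lt_of_splitJ_eq_some hJ

theorem lt_of_mem_Jlist (hC : IsColumn n C) (hadm : OCC n C) {t : ℕ} (ht : t ∈ Jlist n C) :
    t < n := by
  obtain ⟨z, hz, htz⟩ := (forall₂_Jlist_lt_Ilist hC hadm).exists_of_mem_left ht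
  exact htz.trans_le (mem_Ilist.mp hz).2.1

theorem nodup_map_bar_Ilist : ((Ilist n C).map (bar n)).Nodup :=
  pairwise_Ilist.nodup.map_on fun x hx y hy hxy => by
    have := (mem_Ilist.mp hx).2.1
    have := (mem_Ilist.mp hy).2.1
    simp only [bar] at hxy
    omega

theorem forall₂_map_bar_le {l₁ l₂ : List ℕ} (h : List.Forall₂ (· < ·) l₁ l₂) :
    List.Forall₂ (· ≤ ·) (l₂.map (bar n)) (l₁.map (bar n)) := by
  rw [List.forall₂_map_left_iff, List.forall₂_map_right_iff]
  exact List.Forall₂.flip (h.imp fun _ _ hxy => Nat.sub_le_sub_left hxy.le _)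

end

/-- if `C` is admissible then `ℓC ≤ C ≤ rC` entrywise, `ℓC` has the same
barred part as `C` and `rC` has the same unbarred part as `C`. -/
theorem lCol_le_le_rCol (n : ℕ) (C : List ℕ) (hC : IsColumn n C) (hadm : OCC n C) :
    List.Forall₂ (· ≤ ·) (lCol n C) C ∧ List.Forall₂ (· ≤ ·) C (rCol n C) ∧
    (lCol n C).filter (fun x => decide (n < x)) = C.filter (fun x => decide (n < x)) ∧
    (rCol n C).filter (fun x => decide (x ≤ n)) = C.filter (fun x => decide (x ≤ n)) := by
  have hsorted : C.Pairwise (· < ·) := List.isChain_iff_pairwise.mp hC.1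
  have hI : ∀ z ∈ Ilist n C, z ≤ n ∧ z ∈ C ∧ bar n z ∈ C := fun z hz => (mem_Ilist.mp hz).2
  have hJI := forall₂_Jlist_lt_Ilist hC hadm
  refine ⟨?_, ?_, ?_, ?_⟩
  · have := replaceSort_mono (C := C) (s := Ilist n C) (hJI.imp fun _ _ => le_of_lt)
    rwa [replaceSort_self hsorted pairwise_Ilist.nodup fun z hz => (hI z hz).2.1] at this
  · have := replaceSort_mono (C := C) (s := (Ilist n C).map (bar n))
      (forall₂_map_bar_le (n := n) hJI)
    rwa [replaceSort_self hsorted nodup_map_bar_Ilist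
      fun x hx => by obtain ⟨z, hz, rfl⟩ := List.mem_map.mp hx; exact (hI z hz).2.2] at this
  · exact filter_replaceSort (hsorted.imp le_of_lt) (fun z hz => by simpa using (hI z hz).1)
      (fun t ht => by simpa using (lt_of_mem_Jlist hC hadm ht).le)
  · refine filter_replaceSort (hsorted.imp le_of_lt) ?_ ?_ <;> intro x hx <;>
      obtain ⟨z, hz, rfl⟩ := List.mem_map.mp hx <;> refine decide_eq_false ?_ <;> simp only [bar]
    · have := (hI z hz).1; omega
    · have := lt_of_mem_Jlist hC hadm hz; omega
end

section
/- Willis-type greedy matching gives the key in type A: if rC_1 ℓC_2 is a two-column semistandard filling over a totally ordered alphabet with the second column weakly shorter, then processing the entries of the second column from largest to smallest and matching each with the largest unmatched entry of the first column that is ≤ it, every entry of the second column gets matched. -/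
/-!
Greedy matching succeeds as soon as a Hall-type condition holds for down-sets: for every `b`
in the second column, at least as many available entries as entries of the second column
are `≤ b`. The condition survives one greedy step, in which the largest `b` takes the largest
available `a ≤ b`. For a later `c ≤ b`: if `a ≤ c`, no available entry lies in `(a, b]`, so at
least `#{betas ≤ b} - 1 ≥ #{remaining betas ≤ c}` entries `≤ c` remain; if `a > c`, removing
`a` does not change the count below `c`. For a semistandard filling the condition holds
since `c₁[k] ≤ c₂[k] ≤ c₂[i]` for all `k ≤ i`.
-/

/-- Greedy matching over a totally ordered alphabet: process `betas` (given in
decreasing order), matching each with the greatest not-yet-matched element of `avail`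
that is `≤` it; `none` if some beta finds no match. -/
def matchAuxG {α : Type*} [LinearOrder α] (avail : List α) : List α → Option (List (α × α))
  | [] => some []
  | b :: bs =>
    match (avail.filter (fun a => decide (a ≤ b))).max? with
    | none => none
    | some a => (matchAuxG (avail.erase a) bs).map ((b, a) :: ·)

namespace List

variable {α : Type*} [LinearOrder α]

theorem countP_le_countP_of_getElem_le {l₁ l₂ : List α} (hs : l₂.Pairwise (· ≤ ·))
    (hlen : l₂.length ≤ l₁.length)
    (hle : ∀ i (h₁ : i < l₁.length) (h₂ : i < l₂.length), l₁[i] ≤ l₂[i]) (b : α) :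
    l₂.countP (· ≤ b) ≤ l₁.countP (· ≤ b) := by
  induction l₂ generalizing l₁ with
  | nil => simp
  | cons x xs ih =>
    cases l₁ with
    | nil => simp at hlen
    | cons a as =>
      obtain ⟨hx, hxs⟩ := pairwise_cons.mp hs
      by_cases hxb : x ≤ b
      · have hab : a ≤ b := (hle 0 (by simp) (by simp)).trans hxb
        have := ih hxs (by simpa using hlen) fun i h₁ h₂ => hle (i + 1) (by simpa) (by simpa)
        simp only [countP_cons, hxb, hab, decide_true, if_true]
        omega
      · have hzero : (x :: xs).countP (· ≤ b) = 0 :=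
          countP_eq_zero.mpr fun y hy hyb => hxb <| by
            rcases mem_cons.mp hy with rfl | hy
            · simpa using hyb
            · exact (hx y hy).trans (by simpa using hyb)
        omega

end List

theorem matchAuxG_isSome_of_countP_le {α : Type*} [LinearOrder α] {betas avail : List α}
    (hdec : betas.Pairwise (· ≥ ·))
    (hhall : ∀ b ∈ betas, betas.countP (· ≤ b) ≤ avail.countP (· ≤ b)) :
    (matchAuxG avail betas).isSome := by
  induction betas generalizing avail with
  | nil => rfl
  | cons b bs ih =>
    obtain ⟨hb, hbs⟩ := List.pairwise_cons.mp hdec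
    have hcount : bs.length + 1 ≤ avail.countP (· ≤ b) := by
      have hall : (b :: bs).countP (· ≤ b) = bs.length + 1 :=
        List.countP_eq_length.mpr fun c hc => by
          rcases List.mem_cons.mp hc with rfl | hc
          · simp
          · simpa using hb c hc
      simpa [hall] using hhall b List.mem_cons_self
    obtain ⟨a, hmax⟩ : ∃ a, (avail.filter (· ≤ b)).max? = some a := by
      rw [← Option.isSome_iff_exists, List.isSome_max?_iff, ← List.length_pos_iff,
        ← List.countP_eq_length_filter]
      omega
    obtain ⟨⟨ha, hab⟩, hmax_ge⟩ : (a ∈ avail ∧ a ≤ b) ∧ ∀ x ∈ avail, x ≤ b → x ≤ a := by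
      simpa using List.max?_eq_some_iff.mp hmax
    have hrest : (matchAuxG (avail.erase a) bs).isSome := by
      refine ih hbs fun c hc => ?_
      rw [List.countP_erase]
      by_cases hac : a ≤ c
      · have hsame : avail.countP (· ≤ c) = avail.countP (· ≤ b) :=
          List.countP_congr fun x hx => by
            simpa using ⟨fun h => h.trans (hb c hc), fun h => (hmax_ge x hx h).trans hac⟩
        have := bs.countP_le_length (p := (· ≤ c))
        simp only [ha, hac, decide_true, and_self, if_true, hsame]
        omega
      · have := hhall c (List.mem_cons_of_mem _ hc)
        simp only [List.countP_cons, hac, decide_false, Bool.false_eq_true, and_false,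
          if_false, Nat.sub_zero] at this ⊢
        omega
    simp [matchAuxG, hmax, hrest]

theorem greedy_matching_total_general {α : Type*} [LinearOrder α] (c1 c2 : List α)
    (h2 : c2.Chain' (· < ·)) (hlen : c2.length ≤ c1.length)
    (hrow : ∀ i : ℕ, (hi : i < c2.length) →
      c1.get ⟨i, lt_of_lt_of_le hi hlen⟩ ≤ c2.get ⟨i, hi⟩) :
    (matchAuxG c1 c2.reverse).isSome = true := by
  have hsorted : c2.Pairwise (· ≤ ·) := (List.isChain_iff_pairwise.mp h2).imp le_of_lt
  refine matchAuxG_isSome_of_countP_le (List.pairwise_reverse.mpr hsorted) fun b _ => ?_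
  rw [List.countP_reverse]
  exact c1.countP_le_countP_of_getElem_le hsorted hlen (fun i _ hi => by simpa using hrow i hi) b

/-- for a two-column semistandard filling (second column weakly shorter,
rows weakly increasing), the greedy matching matches every entry of the second column. -/
theorem greedy_matching_total {α : Type*} [LinearOrder α] (c1 c2 : List α)
    (h1 : c1.Chain' (· < ·)) (h2 : c2.Chain' (· < ·)) (hlen : c2.length ≤ c1.length)
    (hrow : ∀ i : ℕ, (hi : i < c2.length) →
      c1.get ⟨i, lt_of_lt_of_le hi hlen⟩ ≤ c2.get ⟨i, hi⟩) :
    (matchAuxG c1 c2.reverse).isSome = true :=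
  greedy_matching_total_general c1 c2 h2 hlen hrow
end
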